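/- arXiv:1210.7700 — 4 statements merged into one kernel-verified Lean document; each statement's English description precedes it below -/
import Mathlib

section
/- For every positive integer n, the assignment t ↦ f_t, where f_t(c^i, c^j) := (∏_{p=0}^{i-1} t(c^p)) · (∏_{q=0}^{j-1} t(c^q)) · (∏_{r=0}^{i+j-1} t(c^r)) for i, j = 1, …, n, is a bijection from the set U(C_n, C_2) of unitary maps C_n → C_2 onto the set Z²(C_n, C_2) of normalized 2-cocycles; its inverse sends a normalized 2-cocycle f to the unitary map t_f given by t_f(c^j) := f(c, c^j). -/
open Finset

abbrev Cyc (n : ℕ) := Multiplicative (ZMod n)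

def cg (n : ℕ) : Cyc n := Multiplicative.ofAdd (1 : ZMod n)

def fNat (n : ℕ) (t : Cyc n → Cyc 2) (i j : ℕ) : Cyc 2 :=
  (∏ p ∈ Finset.range i, t (cg n ^ p)) * (∏ q ∈ Finset.range j, t (cg n ^ q)) *
    ∏ r ∈ Finset.range (i + j), t (cg n ^ r)

def fT (n : ℕ) (t : Cyc n → Cyc 2) (a b : Cyc n) : Cyc 2 :=
  fNat n t (Multiplicative.toAdd a).val (Multiplicative.toAdd b).val

noncomputable def sigmaT (n : ℕ) (t : Cyc n → Cyc 2) (j : ℕ) : ℕ :=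
  if j ≤ 1 then 0
  else (if Even j then 1 else 0) + ∑ p ∈ Finset.Ico 1 j, orderOf (t (cg n ^ p))

def IsCocycle {n : ℕ} (f : Cyc n → Cyc n → Cyc 2) : Prop :=
  (∀ h, f 1 h = 1) ∧ (∀ h, f h 1 = 1) ∧
    ∀ a b d, f a b * f (a * b) d = f b d * f a (b * d)

def CS (n : ℕ) (k : Type*) [Field k] : Set ((Cyc n → Cyc 2) × k) :=
  {P | P.1 1 = 1 ∧ P.2 ≠ 0 ∧ P.2 ^ n = (-1 : k) ^ sigmaT n P.1 n}

def cocCond (n : ℕ) (t t' r : Cyc n → Cyc 2) (s : ℕ) : Prop :=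
  ∀ i ∈ Finset.Icc 1 n, ∀ j ∈ Finset.Icc 1 n,
    (∏ p ∈ Finset.range i, t (cg n ^ p) * t (cg n ^ (p + j))) =
      r (cg n ^ i) * r (cg n ^ j) * r (cg n ^ (i + j)) *
        ∏ q ∈ Finset.range (i * s), t' (cg n ^ q) * t' (cg n ^ (q + j * s))

def ApproxRel (n : ℕ) {k : Type*} [Field k] (P Q : (Cyc n → Cyc 2) × k) : Prop :=
  ∃ r : Cyc n → Cyc 2, r 1 = 1 ∧
    (∀ i ∈ Finset.Icc 1 n, ∀ j ∈ Finset.Icc 1 n,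
      (∏ p ∈ Finset.range i, P.1 (cg n ^ p) * P.1 (cg n ^ (p + j))) =
        r (cg n ^ i) * r (cg n ^ j) * r (cg n ^ (i + j)) *
          ∏ q ∈ Finset.range i, Q.1 (cg n ^ q) * Q.1 (cg n ^ (q + j))) ∧
    (∀ i ∈ Finset.Icc 1 n,
      (-1 : k) ^ (1 + sigmaT n P.1 i + orderOf (r (cg n ^ i))) * P.2 ^ i =
        (-1 : k) ^ sigmaT n Q.1 i * Q.2 ^ i)

def EquivRel (n : ℕ) {k : Type*} [Field k] (P Q : (Cyc n → Cyc 2) × k) : Prop :=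
  ∃ β : k, ∃ r : Cyc n → Cyc 2, ∃ s : ℕ,
    β ≠ 0 ∧ r 1 = 1 ∧ 1 ≤ s ∧ s ≤ n - 1 ∧ Nat.gcd s n = 1 ∧
    cocCond n P.1 Q.1 r s ∧
    (∀ i ∈ Finset.Icc 1 n,
      (-1 : k) ^ (1 + sigmaT n P.1 i + orderOf (r (cg n ^ i))) * P.2 ^ i * β =
        (-1 : k) ^ sigmaT n Q.1 (i * s) * Q.2 ^ (i * s))

/-!
Write `A m = ∏_{p<m} t(c^p)`, so that `f_t(c^i, c^j) = A i · A j · A (i+j)` for natural numbers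
`i, j`. As a function of `i, j ∈ ℕ` this is the coboundary of `A`, hence satisfies the
cocycle identity; and since `A (m + n) = A m · A n` while `C₂` has exponent two, it is
`n`-periodic in each argument, so the identity descends to `C_n`. Conversely, the cocycle
identity at `(c, c^i, c^j)` determines `f(c^{i+1}, c^j)` from `f(c^i, c^j)` and `t_f`, which
gives `f_{t_f} = f` by induction on `i`, while
`f_t(c, c^j) = t(c^0) · t(c^j) = t(c^j)` for unitary `t`.
-/

theorem Function.Periodic.prod_range_add_period {M : Type*} [CommMonoid M] {g : ℕ → M} {n : ℕ}
    (hg : Function.Periodic g n) (m : ℕ) :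
    ∏ p ∈ range (m + n), g p = (∏ p ∈ range m, g p) * ∏ p ∈ range n, g p := by
  rw [add_comm, prod_range_add, mul_comm]
  congr 1
  exact prod_congr rfl fun p _ => by rw [add_comm, hg]

lemma cyc_two_mul_self (x : Cyc 2) : x * x = 1 := by
  revert x; decide

lemma cg_pow_period (n : ℕ) : Function.Periodic (fun p : ℕ => cg n ^ p) n := fun p => by
  simp [pow_add, cg, ← ofAdd_nsmul]

lemma cg_pow_val {n : ℕ} [NeZero n] (x : Cyc n) : cg n ^ (Multiplicative.toAdd x).val = x := by
  simp [cg, ← ofAdd_nsmul, ZMod.natCast_val, ZMod.cast_id]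

def partialProd (n : ℕ) (t : Cyc n → Cyc 2) (m : ℕ) : Cyc 2 :=
  ∏ p ∈ range m, t (cg n ^ p)

lemma partialProd_add_period (n : ℕ) (t : Cyc n → Cyc 2) (m : ℕ) :
    partialProd n t (m + n) = partialProd n t m * partialProd n t n :=
  ((cg_pow_period n).comp t).prod_range_add_period m

lemma fNat_eq_partialProd (n : ℕ) (t : Cyc n → Cyc 2) (i j : ℕ) :
    fNat n t i j = partialProd n t i * partialProd n t j * partialProd n t (i + j) :=
  rfl

lemma fNat_comm (n : ℕ) (t : Cyc n → Cyc 2) (i j : ℕ) : fNat n t i j = fNat n t j i := by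
  simp only [fNat_eq_partialProd, mul_comm (partialProd n t i), add_comm i]

lemma fNat_zero_left (n : ℕ) (t : Cyc n → Cyc 2) (j : ℕ) : fNat n t 0 j = 1 := by
  simp [fNat, cyc_two_mul_self]

lemma fNat_succ_left (n : ℕ) (t : Cyc n → Cyc 2) (i j : ℕ) :
    fNat n t (i + 1) j = fNat n t i j * t (cg n ^ i) * t (cg n ^ (i + j)) := by
  simp only [fNat, add_right_comm i 1 j, prod_range_succ]
  ac_rfl

lemma fNat_periodic_left (n : ℕ) (t : Cyc n → Cyc 2) (j : ℕ) :
    Function.Periodic (fun i => fNat n t i j) n := fun i => by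
  have hperiod := partialProd_add_period n t
  simp only [fNat_eq_partialProd, add_right_comm i n j, hperiod]
  calc partialProd n t i * partialProd n t n * partialProd n t j *
        (partialProd n t (i + j) * partialProd n t n)
      = partialProd n t i * partialProd n t j * partialProd n t (i + j) *
          (partialProd n t n * partialProd n t n) := by ac_rfl
    _ = _ := by rw [cyc_two_mul_self, mul_one]

lemma fNat_mod_left (n : ℕ) (t : Cyc n → Cyc 2) (i j : ℕ) :
    fNat n t (i % n) j = fNat n t i j :=
  (fNat_periodic_left n t j).map_mod_nat i

lemma fNat_mod_right (n : ℕ) (t : Cyc n → Cyc 2) (i j : ℕ) :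
    fNat n t i (j % n) = fNat n t i j := by
  rw [fNat_comm, fNat_mod_left, fNat_comm]

lemma fNat_cocycle (n : ℕ) (t : Cyc n → Cyc 2) (i j k : ℕ) :
    fNat n t i j * fNat n t (i + j) k = fNat n t j k * fNat n t i (j + k) := by
  simp only [fNat_eq_partialProd, ← add_assoc]
  generalize partialProd n t i = x, partialProd n t j = y, partialProd n t k = z,
    partialProd n t (i + j) = u, partialProd n t (j + k) = v, partialProd n t (i + j + k) = w
  revert x y z u v w; decide

lemma fT_isCocycle {n : ℕ} [NeZero n] (t : Cyc n → Cyc 2) : IsCocycle (fT n t) := by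
  refine ⟨fun b => ?_, fun a => ?_, fun a b d => ?_⟩
  · rw [fT, toAdd_one, ZMod.val_zero, fNat_zero_left]
  · rw [fT, toAdd_one, ZMod.val_zero, fNat_comm, fNat_zero_left]
  · simp only [fT, toAdd_mul, ZMod.val_add, fNat_mod_left, fNat_mod_right]
    exact fNat_cocycle n t _ _ _

lemma fT_cg_left {n : ℕ} [NeZero n] (t : Cyc n → Cyc 2) (ht : t 1 = 1) (a : Cyc n) :
    fT n t (cg n) a = t a := by
  have hval : (Multiplicative.toAdd (cg n)).val = 1 % n := ZMod.val_one_eq_one_mod n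
  rw [fT, hval, fNat_mod_left, fNat_succ_left, fNat_zero_left, pow_zero, ht, zero_add,
    cg_pow_val, one_mul, one_mul]

lemma fNat_cg_left_of_isCocycle {n : ℕ} {f : Cyc n → Cyc n → Cyc 2} (hf : IsCocycle f)
    (i j : ℕ) : fNat n (f (cg n)) i j = f (cg n ^ i) (cg n ^ j) := by
  induction i with
  | zero => rw [fNat_zero_left, pow_zero, hf.1]
  | succ i ih =>
    have hc := hf.2.2 (cg n) (cg n ^ i) (cg n ^ j)
    rw [← pow_succ', ← pow_add] at hc
    have hsolve : f (cg n ^ (i + 1)) (cg n ^ j) =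
        f (cg n) (cg n ^ i) * (f (cg n ^ i) (cg n ^ j) * f (cg n) (cg n ^ (i + j))) := by
      rw [← hc, ← mul_assoc, cyc_two_mul_self, one_mul]
    rw [hsolve, fNat_succ_left, ih]
    ac_rfl

lemma fT_cg_left_of_isCocycle {n : ℕ} [NeZero n] {f : Cyc n → Cyc n → Cyc 2}
    (hf : IsCocycle f) : fT n (f (cg n)) = f := by
  funext a b
  rw [fT, fNat_cg_left_of_isCocycle hf, cg_pow_val, cg_pow_val]

theorem stmt3 (n : ℕ) (hn : 0 < n) :
    ∃ e : {t : Cyc n → Cyc 2 // t 1 = 1} ≃ {f : Cyc n → Cyc n → Cyc 2 // IsCocycle f},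
      (∀ t, (e t).1 = fT n t.1) ∧
      (∀ f, (e.symm f).1 = fun a => f.1 (cg n) a) := by
  have : NeZero n := ⟨hn.ne'⟩
  refine ⟨⟨fun t => ⟨fT n t.1, fT_isCocycle t.1⟩, fun f => ⟨f.1 (cg n), f.2.2.1 (cg n)⟩,
    fun t => ?_, fun f => ?_⟩, fun t => rfl, fun f => rfl⟩
  · exact Subtype.ext (funext (fT_cg_left t.1 t.2))
  · exact Subtype.ext (fT_cg_left_of_isCocycle f.2)
end

section
/- For every positive integer n, every unitary map t : C_n → C_2 and every natural number j, one has σ_t(n + j) ≡ σ_t(n) + σ_t(j) (mod 2). -/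
open Finset

lemma cg_pow_add (n p : ℕ) : cg n ^ (n + p) = cg n ^ p := by
  have h : (cg n) ^ n = 1 := by
    show Multiplicative.ofAdd (1 : ZMod n) ^ n = 1
    rw [← ofAdd_nsmul]
    simp
  rw [pow_add, h, one_mul]

theorem stmt4 (n : ℕ) (hn : 0 < n) (t : Cyc n → Cyc 2) (ht : t 1 = 1) (j : ℕ) :
    sigmaT n t (n + j) ≡ sigmaT n t n + sigmaT n t j [MOD 2] := by
  rcases Nat.eq_zero_or_pos j with hj | hj
  · subst hj; simp [sigmaT, Nat.ModEq]
  · have key : ∑ p ∈ Finset.Ico 1 (n + j), orderOf (t (cg n ^ p))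
        = (∑ p ∈ Finset.Ico 1 n, orderOf (t (cg n ^ p)))
          + (1 + ∑ p ∈ Finset.Ico 1 j, orderOf (t (cg n ^ p))) := by
      rw [← Finset.sum_Ico_consecutive (fun p => orderOf (t (cg n ^ p)))
        (Nat.one_le_iff_ne_zero.mpr hn.ne') (Nat.le_add_right n j)]
      congr 1
      have h1 : ∀ p ∈ Finset.Ico n (n + j), orderOf (t (cg n ^ p))
          = orderOf (t (cg n ^ (p - n))) := by
        intro p hp
        simp only [Finset.mem_Ico] at hp
        rw [show p = n + (p - n) by omega, cg_pow_add, Nat.add_sub_cancel_left]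
      rw [Finset.sum_congr rfl h1, Finset.sum_Ico_eq_sum_range]
      simp only [Nat.add_sub_cancel_left, Nat.add_sub_cancel]
      rw [Finset.range_eq_Ico, Finset.sum_eq_sum_Ico_succ_bot hj]
      have : t (cg n ^ 0) = 1 := by simpa using ht
      rw [this, orderOf_one]
    have hA0 : n ≤ 1 → (∑ p ∈ Finset.Ico 1 n, orderOf (t (cg n ^ p))) = 0 := by
      intro h; rw [Finset.Ico_eq_empty (by omega)]; simp
    have hB0 : j ≤ 1 → (∑ p ∈ Finset.Ico 1 j, orderOf (t (cg n ^ p))) = 0 := by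
      intro h; rw [Finset.Ico_eq_empty (by omega)]; simp
    simp only [sigmaT, Nat.ModEq, Nat.even_iff]
    rw [key]
    revert hA0 hB0
    generalize (∑ p ∈ Finset.Ico 1 n, orderOf (t (cg n ^ p))) = A
    generalize (∑ p ∈ Finset.Ico 1 j, orderOf (t (cg n ^ p))) = B
    intro hA0 hB0
    split_ifs <;> omega
end

section
/- Let k be a field of characteristic ≠ 2 containing ζ with ζ² = −1, let n = 2, and let t_1, t_2 : C_2 → C_2 be the unitary maps with t_1(c) = 1, t_2(c) = c. Then (t_1, λ) is not ≡-equivalent to (t_2, μ) for any λ ∈ {1, −1} and μ ∈ {ζ, −ζ}: there is no triple (β, r, s) ∈ k^* × U(C_2, C_2) × {1} satisfying ∏_{p=0}^{i-1} t_1(c^p) t_1(c^{p+j}) = r(c^i) r(c^j) r(c^{i+j}) ∏_{q=0}^{i-1} t_2(c^q) t_2(c^{q+j}) for all i, j = 1, 2 together with (−1)^{1 + σ_{t_1}(i) + ord r(c^i)} λ^i β = (−1)^{σ_{t_2}(i)} μ^i for all i = 1, 2. -/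
open Finset

theorem stmt16 (k : Type*) [Field k] (hchar : ringChar k ≠ 2) (ζ : k) (hζ : ζ ^ 2 = -1)
    (t1 t2 : Cyc 2 → Cyc 2) (h11 : t1 1 = 1) (h1c : t1 (cg 2) = 1)
    (h21 : t2 1 = 1) (h2c : t2 (cg 2) = cg 2) :
    ∀ lam ∈ ({1, -1} : Set k), ∀ μ ∈ ({ζ, -ζ} : Set k),
      ¬ EquivRel 2 (t1, lam) (t2, μ) := by
  intro lam hlam μ hμ
  rintro ⟨β, r, s, hβ, hr1, hs1, hs2, hgcd, hcoc, hlin⟩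
  have hs : s = 1 := by omega
  subst hs
  have hlam2 : lam ^ 2 = 1 := by
    rcases hlam with h | h <;> subst h <;> ring
  have hμ2 : μ ^ 2 = -1 := by
    rcases hμ with h | h <;> subst h <;> [exact hζ; simpa using hζ]
  -- sigma values
  have hIco : Finset.Ico 1 2 = {1} := rfl
  have hσ11 : sigmaT 2 t1 1 = 0 := by simp [sigmaT]
  have hσ21 : sigmaT 2 t2 1 = 0 := by simp [sigmaT]
  have hσ12 : sigmaT 2 t1 2 = 2 := by
    simp [sigmaT, hIco, h1c]
  have hordc : orderOf (cg 2) = 2 :=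
    orderOf_eq_prime (by decide) (by decide)
  have hσ22 : sigmaT 2 t2 2 = 3 := by
    simp [sigmaT, hIco, h2c, hordc]
  have hcg2 : (cg 2) ^ 2 = 1 := by decide
  -- i = 2 equation
  have E2 := hlin 2 (by decide)
  rw [show (2 * 1 : ℕ) = 2 from rfl] at E2
  rw [hcg2, hr1, orderOf_one, hσ12, hσ22] at E2
  simp only [Prod.snd] at E2
  have hβ1 : β = 1 := by
    have : (-1 : k) ^ (1 + 2 + 1) * lam ^ 2 * β = (-1 : k) ^ 3 * μ ^ 2 := E2
    rw [hlam2, hμ2] at this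
    norm_num at this
    exact this
  -- i = 1 equation
  have E1 := hlin 1 (by decide)
  rw [show (1 * 1 : ℕ) = 1 from rfl, pow_one, hσ11, hσ21] at E1
  simp only [Prod.snd, pow_one] at E1
  rw [hβ1, mul_one, pow_zero, one_mul] at E1
  -- square E1
  have hsq : μ ^ 2 = 1 := by
    rw [← E1, mul_pow, ← pow_mul, Nat.mul_comm, pow_mul]
    norm_num [hlam2]
  rw [hμ2] at hsq
  have h2 : (2 : k) = 0 := by linear_combination -hsq
  have hdvd : ringChar k ∣ 2 := ringChar.dvd (by exact_mod_cast h2)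
  have h1 : ringChar k ≠ 1 := CharP.ringChar_ne_one
  rcases (Nat.dvd_prime Nat.prime_two).mp hdvd with h | h <;> tauto
end

section
/- Let k be a field of characteristic ≠ 2 and n = 2. If −1 is not a square in k, then the quotient of CS(2, k) by the equivalence relation ≈ has exactly one class, and the quotient by ≡ also has exactly one class. If −1 = ζ² for some ζ ∈ k, then the quotient of CS(2, k) by ≈ has exactly two classes, represented by (t_1, 1) and (t_2, ζ), and the quotient by ≡ likewise has exactly two classes with the same representatives; here t_1(c) = 1 and t_2(c) = c. -/
open Finset

lemma sig1 (t : Cyc 2 → Cyc 2) : sigmaT 2 t 1 = 0 := by simp [sigmaT]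

lemma sig2 (t : Cyc 2 → Cyc 2) : sigmaT 2 t 2 = 1 + orderOf (t (cg 2)) := by
  simp [sigmaT, show Finset.Ico 1 2 = {1} from rfl]

lemma ordc : orderOf (cg 2) = 2 := orderOf_eq_prime (by decide) (by decide)

lemma cyc2_cases : ∀ x : Cyc 2, x = 1 ∨ x = cg 2 := by decide

lemma mul_self_cyc2 : ∀ x : Cyc 2, x * x = 1 := by decide

lemma coc_aux (t t' r : Cyc 2 → Cyc 2) (ht : t 1 = 1) (ht' : t' 1 = 1)
    (hr : r 1 = 1) (hc : t (cg 2) = t' (cg 2)) :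
    ∀ i ∈ Finset.Icc 1 2, ∀ j ∈ Finset.Icc 1 2,
      (∏ p ∈ Finset.range i, t (cg 2 ^ p) * t (cg 2 ^ (p + j))) =
        r (cg 2 ^ i) * r (cg 2 ^ j) * r (cg 2 ^ (i + j)) *
          ∏ q ∈ Finset.range i, t' (cg 2 ^ q) * t' (cg 2 ^ (q + j)) := by
  intro i hi j hj
  simp only [Finset.mem_Icc] at hi hj
  obtain ⟨hi1, hi2⟩ := hi; obtain ⟨hj1, hj2⟩ := hj
  interval_cases i <;> interval_cases j <;>
    simp only [Finset.prod_range_succ, Finset.prod_range_one, Finset.prod_range_zero,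
      one_mul, mul_one, pow_zero, pow_one, Nat.reduceAdd, zero_add,
      show (cg 2 : Cyc 2) ^ 2 = 1 from by decide, show (cg 2 : Cyc 2) ^ 3 = cg 2 from by decide,
      show (cg 2 : Cyc 2) ^ 4 = 1 from by decide, ht, ht', hr, hc] <;>
    (generalize t' (cg 2) = a; generalize r (cg 2) = b; revert a b; decide)

section Field
variable {k : Type*} [Field k]

lemma approx_of (P Q : (Cyc 2 → Cyc 2) × k) (hP : P.1 1 = 1) (hQ : Q.1 1 = 1)
    (hc : P.1 (cg 2) = Q.1 (cg 2)) (hmu : Q.2 = P.2 ∨ Q.2 = -P.2) :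
    ApproxRel 2 P Q := by
  have hsq : Q.2 ^ 2 = P.2 ^ 2 := by rcases hmu with h | h <;> rw [h] <;> ring
  have key : (-1 : k) ^ (1 + sigmaT 2 P.1 2 + 1) * P.2 ^ 2 =
      (-1 : k) ^ sigmaT 2 Q.1 2 * Q.2 ^ 2 := by
    rw [hsq, sig2, sig2, hc]
    rw [show 1 + (1 + orderOf (Q.1 (cg 2))) + 1 = (1 + orderOf (Q.1 (cg 2))) + 2 from by ring,
      pow_add]
    norm_num
  rcases hmu with h | h
  · refine ⟨fun _ => 1, rfl, ?_, ?_⟩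
    · exact coc_aux P.1 Q.1 (fun _ => 1) hP hQ rfl hc
    · intro i hi
      simp only [Finset.mem_Icc] at hi
      obtain ⟨hi1, hi2⟩ := hi
      interval_cases i
      · rw [sig1, sig1, h]
        norm_num
      · have e2 : orderOf ((fun _ : Cyc 2 => (1 : Cyc 2)) (cg 2 ^ 2)) = 1 := orderOf_one
        rw [e2]
        exact key
  · refine ⟨fun x => x, rfl, ?_, ?_⟩
    · exact coc_aux P.1 Q.1 (fun x => x) hP hQ rfl hc
    · intro i hi
      simp only [Finset.mem_Icc] at hi
      obtain ⟨hi1, hi2⟩ := hi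
      interval_cases i
      · have e1 : orderOf ((fun x : Cyc 2 => x) (cg 2 ^ 1)) = 2 := by
          show orderOf ((cg 2 : Cyc 2) ^ 1) = 2
          rw [pow_one, ordc]
        rw [e1, sig1, sig1, h]
        norm_num
      · have e2 : orderOf ((fun x : Cyc 2 => x) (cg 2 ^ 2)) = 1 := by
          show orderOf ((cg 2 : Cyc 2) ^ 2) = 1
          rw [show (cg 2 : Cyc 2) ^ 2 = 1 from by decide, orderOf_one]
        rw [e2]
        exact key

lemma equiv_of_approx (P Q : (Cyc 2 → Cyc 2) × k) (h : ApproxRel 2 P Q) :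
    EquivRel 2 P Q := by
  obtain ⟨r, hr1, hcoc, hsc⟩ := h
  refine ⟨1, r, 1, one_ne_zero, hr1, le_refl 1, by norm_num, by norm_num, ?_, ?_⟩
  · intro i hi j hj
    simpa using hcoc i hi j hj
  · intro i hi
    simpa using hsc i hi

lemma not_approx (P Q : (Cyc 2 → Cyc 2) × k) (hP : P.1 1 = 1) (hQ : Q.1 1 = 1)
    (hne : P.1 (cg 2) ≠ Q.1 (cg 2)) : ¬ ApproxRel 2 P Q := by
  rintro ⟨r, hr1, hcoc, -⟩
  have h := hcoc 1 (by decide) 1 (by decide)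
  simp only [Finset.prod_range_one, pow_one, pow_zero, zero_add, one_mul, mul_one,
    show (cg 2 : Cyc 2) ^ 2 = 1 from by decide, hP, hQ, hr1, mul_self_cyc2] at h
  exact hne h

lemma not_equiv (P Q : (Cyc 2 → Cyc 2) × k) (hP : P.1 1 = 1) (hQ : Q.1 1 = 1)
    (hne : P.1 (cg 2) ≠ Q.1 (cg 2)) : ¬ EquivRel 2 P Q := by
  rintro ⟨β, r, s, hβ, hr1, hs1, hs2, hgcd, hcoc, -⟩
  have hs : s = 1 := le_antisymm hs2 hs1
  subst hs
  unfold cocCond at hcoc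
  have h := hcoc 1 (by decide) 1 (by decide)
  simp only [Finset.prod_range_one, pow_one, pow_zero, zero_add, one_mul, mul_one,
    Nat.mul_one, show (cg 2 : Cyc 2) ^ 2 = 1 from by decide, hP, hQ, hr1, mul_self_cyc2] at h
  exact hne h

end Field

theorem stmt18 (k : Type*) [Field k] (hchar : ringChar k ≠ 2)
    (t1 t2 : Cyc 2 → Cyc 2) (h11 : t1 1 = 1) (h1c : t1 (cg 2) = 1)
    (h21 : t2 1 = 1) (h2c : t2 (cg 2) = cg 2) :
    ((¬ ∃ ζ : k, ζ ^ 2 = -1) →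
      ((CS 2 k).Nonempty ∧
        (∀ P ∈ CS 2 k, ∀ Q ∈ CS 2 k, ApproxRel 2 P Q) ∧
        (∀ P ∈ CS 2 k, ∀ Q ∈ CS 2 k, EquivRel 2 P Q))) ∧
    (∀ ζ : k, ζ ^ 2 = -1 →
      ((t1, (1 : k)) ∈ CS 2 k ∧ (t2, ζ) ∈ CS 2 k ∧
        ¬ ApproxRel 2 (t1, (1 : k)) (t2, ζ) ∧ ¬ EquivRel 2 (t1, (1 : k)) (t2, ζ) ∧
        (∀ P ∈ CS 2 k, ApproxRel 2 P (t1, (1 : k)) ∨ ApproxRel 2 P (t2, ζ)) ∧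
        (∀ P ∈ CS 2 k, EquivRel 2 P (t1, (1 : k)) ∨ EquivRel 2 P (t2, ζ)))) := by
  have mem1 : (t1, (1 : k)) ∈ CS 2 k := by
    refine ⟨h11, one_ne_zero, ?_⟩
    show (1 : k) ^ 2 = (-1 : k) ^ sigmaT 2 t1 2
    rw [sig2, h1c, orderOf_one]
    norm_num
  -- square values of CS members
  have sqval : ∀ P ∈ CS 2 k, (P.1 (cg 2) = 1 ∧ P.2 ^ 2 = 1) ∨
      (P.1 (cg 2) = cg 2 ∧ P.2 ^ 2 = -1) := by
    rintro P ⟨hP1, hP2, hP3⟩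
    rw [sig2] at hP3
    rcases cyc2_cases (P.1 (cg 2)) with h | h
    · left
      refine ⟨h, ?_⟩
      rw [hP3, h, orderOf_one]; norm_num
    · right
      refine ⟨h, ?_⟩
      rw [hP3, h, ordc]; norm_num
  -- main approx lemma between two CS members with square roots
  constructor
  · intro hnsq
    have forced : ∀ P ∈ CS 2 k, P.1 (cg 2) = 1 ∧ P.2 ^ 2 = 1 := by
      intro P hP
      rcases sqval P hP with h | ⟨-, h2⟩
      · exact h
      · exact absurd ⟨P.2, h2⟩ hnsq
    have happ : ∀ P ∈ CS 2 k, ∀ Q ∈ CS 2 k, ApproxRel 2 P Q := by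
      intro P hP Q hQ
      obtain ⟨hPc, hPs⟩ := forced P hP
      obtain ⟨hQc, hQs⟩ := forced Q hQ
      have h0 : (Q.2 - P.2) * (Q.2 + P.2) = 0 := by linear_combination hQs - hPs
      refine approx_of P Q hP.1 hQ.1 (by rw [hPc, hQc]) ?_
      rcases mul_eq_zero.mp h0 with h | h
      · exact Or.inl (by linear_combination h)
      · exact Or.inr (by linear_combination h)
    exact ⟨⟨_, mem1⟩, happ, fun P hP Q hQ => equiv_of_approx P Q (happ P hP Q hQ)⟩
  · intro ζ hζ
    have hζ0 : ζ ≠ 0 := by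
      intro h; rw [h] at hζ
      simp at hζ
    have mem2 : (t2, ζ) ∈ CS 2 k := by
      refine ⟨h21, hζ0, ?_⟩
      show ζ ^ 2 = (-1 : k) ^ sigmaT 2 t2 2
      rw [sig2, h2c, ordc]
      norm_num [hζ]
    have hne : t1 (cg 2) ≠ t2 (cg 2) := by rw [h1c, h2c]; decide
    have classif : ∀ P ∈ CS 2 k, ApproxRel 2 P (t1, (1 : k)) ∨ ApproxRel 2 P (t2, ζ) := by
      intro P hP
      rcases sqval P hP with ⟨hc, hs⟩ | ⟨hc, hs⟩
      · left
        refine approx_of P (t1, 1) hP.1 h11 (by rw [hc]; exact h1c.symm) ?_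
        have h0 : ((1 : k) - P.2) * (1 + P.2) = 0 := by linear_combination -hs
        rcases mul_eq_zero.mp h0 with h | h
        · exact Or.inl (by linear_combination h)
        · exact Or.inr (by linear_combination h)
      · right
        refine approx_of P (t2, ζ) hP.1 h21 (by rw [hc]; exact h2c.symm) ?_
        have h0 : (ζ - P.2) * (ζ + P.2) = 0 := by linear_combination hζ - hs
        rcases mul_eq_zero.mp h0 with h | h
        · exact Or.inl (by linear_combination h)
        · exact Or.inr (by linear_combination h)
    refine ⟨mem1, mem2, not_approx _ _ h11 h21 hne, not_equiv _ _ h11 h21 hne,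
      classif, fun P hP => ?_⟩
    rcases classif P hP with h | h
    · exact Or.inl (equiv_of_approx _ _ h)
    · exact Or.inr (equiv_of_approx _ _ h)
end
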